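/- Willems' fundamental lemma: let A ∈ ℝ^{n×n}, B ∈ ℝ^{n×m}, C ∈ ℝ^{ℓ×n}, D ∈ ℝ^{ℓ×m} with the pair (A,B) controllable, i.e., the matrix [B AB ⋯ A^{n−1}B] has rank n. Let (û(i), ŷ(i))_{i=0}^{N−1} be an input/output trajectory of the deterministic system x(k+1) = A x(k) + B u(k), y(k) = C x(k) + D u(k) (i.e., there exist states x̂(0),…,x̂(N) with x̂(i+1) = A x̂(i) + B û(i) and ŷ(i) = C x̂(i) + D û(i) for all 0 ≤ i ≤ N−1), and suppose the input signal û is persistently exciting of order n + K. Build the matrix 𝓗_K := col(Û_{0,K,N−K+1}, Ŷ_{0,K,N−K+1}) ∈ ℝ^{(m+ℓ)K × (N−K+1)} by stacking the depth-K Hankel matrices of û and ŷ. Then a pair (u, y) ∈ ℝ^{mK} × ℝ^{ℓK} is a K-long input/output trajectory of the system (i.e., there exist x(0),…,x(K) with x(k+1) = A x(k) + B u(k) and y(k) = C x(k) + D u(k) for 0 ≤ k ≤ K−1) if and only if col(u, y) lies in the column space of 𝓗_K. -/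

import Mathlib

/-- The depth-`K` (block-)Hankel matrix of a signal `z(0), …, z(N−1)` with values in
`ℝ^w`: its `((i,a), j)` entry is the `a`-th component of `z(i+j)`, for `0 ≤ i ≤ K−1`
and `0 ≤ j ≤ N−K`. -/
def hankelMatrix {w : ℕ} (K N : ℕ) (z : ℕ → Fin w → ℝ) :
    Matrix (Fin K × Fin w) (Fin (N - K + 1)) ℝ :=
  Matrix.of fun p j => z (p.1.1 + j.1) p.2

/-- The matrix `𝓗_K = col(Û_{0,K,N−K+1}, Ŷ_{0,K,N−K+1})` obtained by stacking the
depth-`K` Hankel matrices of the input signal `u` (values in `ℝ^m`) and of the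
output signal `y` (values in `ℝ^ℓ`). -/
def stackedHankel {m ℓ : ℕ} (K N : ℕ) (u : ℕ → Fin m → ℝ) (y : ℕ → Fin ℓ → ℝ) :
    Matrix ((Fin K × Fin m) ⊕ (Fin K × Fin ℓ)) (Fin (N - K + 1)) ℝ :=
  Matrix.of fun p j =>
    Sum.elim (fun q : Fin K × Fin m => u (q.1.1 + j.1) q.2)
             (fun q : Fin K × Fin ℓ => y (q.1.1 + j.1) q.2) p


/-!
Stacking the state snapshots `xh j` on top of the depth-`K` input Hankel matrix gives a
matrix of full row rank, so one combination `g` of time-shifted data windows reaches any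
initial state and any `K`-long input; the combined data is again a trajectory, and since
the response is determined by the initial state and the input, its outputs are `y`.

For the rank claim, a left-kernel vector `(ξ, η)` is a relation
`ξ ⬝ x(s) + ∑ i, η i ⬝ u(s+i) = 0` along the data. Substituting the dynamics `t ≤ n` times
and summing with the coefficients of the characteristic polynomial of `A` eliminates the
state (Cayley–Hamilton) and leaves a relation among the inputs alone over a window of
length `n + K`, which persistent excitation forces to vanish. Its coefficients obey a
backward recurrence giving `η = 0` and `ξ Aᵈ B = 0` for `d < n`, so `ξ = 0` by
controllability.
-/
open Matrix Finset

section LinearAlgebra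

variable {R r c : Type*} [Field R] [Fintype r] [Fintype c] {M : Matrix r c R}

theorem Matrix.vecMul_injective_of_rank_eq_card (h : M.rank = Fintype.card r) :
    Function.Injective M.vecMul := by
  rw [vecMul_injective_iff, linearIndependent_iff_card_eq_finrank_span, ← h,
    rank_eq_finrank_span_row, Set.finrank]

theorem Matrix.mulVec_surjective_of_vecMul_eq_zero (h : ∀ v, v ᵥ* M = 0 → v = 0) :
    Function.Surjective M.mulVec := by
  have hinj : Function.Injective M.vecMul := fun v w hvw =>
    sub_eq_zero.1 (h _ (by rw [sub_vecMul]; exact sub_eq_zero.2 hvw))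
  have hrange : LinearMap.range M.mulVecLin = ⊤ :=
    Submodule.eq_top_of_finrank_eq <| by
      rw [← rank, (vecMul_injective_iff.mp hinj).rank_matrix,
        Module.finrank_fintype_fun_eq_card]
  exact LinearMap.range_eq_top.mp hrange

end LinearAlgebra

theorem eq_zero_of_recurrence {R M : Type*} [Ring R] [AddCommGroup M] [Module R M]
    {n L : ℕ} {c : ℕ → R} (hc : c n = 1) {ψ : ℕ → M} (hψ : ∀ j, L ≤ j → ψ j = 0)
    (hrec : ∀ i, ∑ t ∈ range (n + 1), c t • ψ (i + n - t) = 0) (j : ℕ) : ψ j = 0 := by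
  suffices ∀ d j, L ≤ j + d → ψ j = 0 from this L j (by omega)
  intro d
  induction d with
  | zero => exact hψ
  | succ d ih =>
    intro j hj
    have hlater : ∑ t ∈ range n, c t • ψ (j + n - t) = 0 :=
      sum_eq_zero fun t ht => by
        rw [ih _ (by have := mem_range.1 ht; omega), smul_zero]
    simpa [sum_range_succ, hc, hlater] using hrec j

section Trajectory

variable {R : Type*} [CommRing R] {n m ℓ : ℕ} (A : Matrix (Fin n) (Fin n) R)
  (B : Matrix (Fin n) (Fin m) R) (C : Matrix (Fin ℓ) (Fin n) R) (D : Matrix (Fin ℓ) (Fin m) R)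

def IsTrajectory (T : ℕ) (x : ℕ → Fin n → R) (u : ℕ → Fin m → R) (y : ℕ → Fin ℓ → R) :
    Prop :=
  ∀ k < T, x (k + 1) = A *ᵥ x k + B *ᵥ u k ∧ y k = C *ᵥ x k + D *ᵥ u k

def shiftedSum {w M : ℕ} (z : ℕ → Fin w → R) (g : Fin M → R) (k : ℕ) : Fin w → R :=
  ∑ j, g j • z (k + j)

variable {A B C D}

theorem IsTrajectory.shiftedSum {N T M : ℕ} {x : ℕ → Fin n → R} {u : ℕ → Fin m → R}
    {y : ℕ → Fin ℓ → R} (h : IsTrajectory A B C D N x u y) (hTM : T + M ≤ N + 1)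
    (g : Fin M → R) :
    IsTrajectory A B C D T (shiftedSum x g) (shiftedSum u g) (shiftedSum y g) := by
  intro k hk
  simp only [_root_.shiftedSum, mulVec_sum, mulVec_smul, ← sum_add_distrib, ← smul_add]
  constructor <;> refine sum_congr rfl fun j _ => ?_
  · rw [add_right_comm, (h (k + j) (by omega)).1]
  · rw [(h (k + j) (by omega)).2]

theorem IsTrajectory.output_eq {T : ℕ} {x x' : ℕ → Fin n → R} {u u' : ℕ → Fin m → R}
    {y y' : ℕ → Fin ℓ → R} (h : IsTrajectory A B C D T x u y)
    (h' : IsTrajectory A B C D T x' u' y') (hx : x 0 = x' 0) (hu : ∀ k < T, u k = u' k) :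
    ∀ k < T, y k = y' k := by
  have hstate : ∀ k ≤ T, x k = x' k := by
    intro k
    induction k with
    | zero => exact fun _ => hx
    | succ k ih =>
      intro hk
      rw [(h k hk).1, (h' k hk).1, ih (by omega), hu k hk]
  intro k hk
  rw [(h k hk).2, (h' k hk).2, hstate k hk.le, hu k hk]

end Trajectory

theorem hankelMatrix_mulVec {w K N : ℕ} (z : ℕ → Fin w → ℝ) (g : Fin (N - K + 1) → ℝ)
    (q : Fin K × Fin w) : (hankelMatrix K N z *ᵥ g) q = shiftedSum z g q.1 q.2 := by
  simp [hankelMatrix, shiftedSum, mulVec, dotProduct, Finset.sum_apply, mul_comm]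

theorem vecMul_hankelMatrix {w L N : ℕ} (z : ℕ → Fin w → ℝ) (θ : ℕ → Fin w → ℝ)
    (j : Fin (N - L + 1)) :
    ((fun p : Fin L × Fin w => θ p.1 p.2) ᵥ* hankelMatrix L N z) j =
      ∑ i ∈ range L, θ i ⬝ᵥ z (j + i) := by
  rw [← Fin.sum_univ_eq_sum_range (fun i => θ i ⬝ᵥ z (j + i)), vecMul, dotProduct,
    Fintype.sum_prod_type]
  simp [hankelMatrix, dotProduct, add_comm]

theorem stackedHankel_mulVec_eq_iff {m ℓ K N : ℕ} (uh : ℕ → Fin m → ℝ) (yh : ℕ → Fin ℓ → ℝ)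
    (g : Fin (N - K + 1) → ℝ) (u : ℕ → Fin m → ℝ) (y : ℕ → Fin ℓ → ℝ) :
    stackedHankel K N uh yh *ᵥ g =
        Sum.elim (fun q : Fin K × Fin m => u q.1.1 q.2) (fun q : Fin K × Fin ℓ => y q.1.1 q.2) ↔
      ∀ k < K, shiftedSum uh g k = u k ∧ shiftedSum yh g k = y k := by
  have hstack :
      stackedHankel K N uh yh = fromRows (hankelMatrix K N uh) (hankelMatrix K N yh) := by
    ext (_ | _) _ <;> rfl
  simp only [hstack, fromRows_mulVec, funext_iff, Sum.forall, Sum.elim_inl, Sum.elim_inr,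
    hankelMatrix_mulVec, Prod.forall, Fin.forall_iff, ← forall_and]

theorem eq_zero_of_hankelMatrix_rank {w L N : ℕ} {z : ℕ → Fin w → ℝ} (hL : L ≤ N)
    (hPE : (hankelMatrix L N z).rank = w * L) {θ : ℕ → Fin w → ℝ}
    (hθ : ∀ s, s + L ≤ N → ∑ i ∈ range L, θ i ⬝ᵥ z (s + i) = 0) : ∀ i < L, θ i = 0 := by
  have hinj := vecMul_injective_of_rank_eq_card (M := hankelMatrix L N z)
    (by simp [hPE, mul_comm])
  have hker : (fun p : Fin L × Fin w => θ p.1 p.2) ᵥ* hankelMatrix L N z = 0 :=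
    funext fun j => by
      rw [vecMul_hankelMatrix, hθ j (by omega)]
      rfl
  have hzero := hinj (hker.trans (zero_vecMul _).symm)
  exact fun i hi => funext fun a => congrFun hzero (⟨i, hi⟩, a)

section Relations

variable {n m : ℕ} (A : Matrix (Fin n) (Fin n) ℝ) (B : Matrix (Fin n) (Fin m) ℝ)

def ctrbMatrix : Matrix (Fin n) (Fin n × Fin m) ℝ :=
  Matrix.of fun i p => (A ^ (p.1 : ℕ) * B) i p.2

theorem eq_zero_of_vecMul_ctrbMatrix (hctrb : (ctrbMatrix A B).rank = n) {ξ : Fin n → ℝ}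
    (hξ : ∀ d < n, ξ ᵥ* (A ^ d * B) = 0) : ξ = 0 :=
  vecMul_injective_of_rank_eq_card (by rw [hctrb, Fintype.card_fin]) <| by
    ext p
    exact (congrFun (hξ p.1 p.1.2) p.2).trans (congrFun (zero_vecMul _) p).symm

/-- Substituting `x(s) = A x(s-1) + B u(s-1)` `t` times into a relation
`ξ ⬝ x(s) + ∑ i, η i ⬝ u(s+i) = 0` gives the relation with state part `ξ A^t` and input
part `shiftRelation A B ξ η t`. -/
def shiftRelation (ξ : Fin n → ℝ) (η : ℕ → Fin m → ℝ) (t i : ℕ) : Fin m → ℝ :=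
  if i < t then ξ ᵥ* (A ^ (t - 1 - i) * B) else η (i - t)

variable {A B} {ξ : Fin n → ℝ} {η : ℕ → Fin m → ℝ} {N K : ℕ} {xh : ℕ → Fin n → ℝ}
  {uh : ℕ → Fin m → ℝ}

theorem shiftRelation_add_add (t d i : ℕ) :
    shiftRelation A B ξ η (t + d) (i + d) = shiftRelation A B ξ η t i := by
  unfold shiftRelation
  by_cases hi : i < t
  · rw [if_pos (by omega), if_pos hi]
    congr 3
    omega
  · rw [if_neg (by omega), if_neg hi]
    congr 1
    omega

theorem shiftRelation_eq_zero {K t i : ℕ} (hη : ∀ k, K ≤ k → η k = 0) (hi : t + K ≤ i) :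
    shiftRelation A B ξ η t i = 0 := by
  rw [shiftRelation, if_neg (by omega), hη _ (by omega)]

theorem dotProduct_add_sum_shiftRelation_eq_zero {L : ℕ}
    (hx : ∀ s < N, xh (s + 1) = A *ᵥ xh s + B *ᵥ uh s)
    (hrel : ∀ s, s + L ≤ N → ξ ⬝ᵥ xh s + ∑ i ∈ range L, η i ⬝ᵥ uh (s + i) = 0)
    (t s : ℕ) (hs : s + t + L ≤ N) :
    (ξ ᵥ* A ^ t) ⬝ᵥ xh s + ∑ i ∈ range (t + L), shiftRelation A B ξ η t i ⬝ᵥ uh (s + i) =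
      0 := by
  induction t generalizing s with
  | zero => simpa [shiftRelation] using hrel s (by omega)
  | succ t ih =>
    calc (ξ ᵥ* A ^ (t + 1)) ⬝ᵥ xh s
          + ∑ i ∈ range (t + 1 + L), shiftRelation A B ξ η (t + 1) i ⬝ᵥ uh (s + i)
        = (ξ ᵥ* A ^ t) ⬝ᵥ (A *ᵥ xh s) + ((ξ ᵥ* (A ^ t * B)) ⬝ᵥ uh s
          + ∑ i ∈ range (t + L), shiftRelation A B ξ η t i ⬝ᵥ uh (s + 1 + i)) := by
          have hfirst : shiftRelation A B ξ η (t + 1) 0 = ξ ᵥ* (A ^ t * B) := by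
            simp [shiftRelation]
          rw [add_right_comm, sum_range_succ', add_comm (∑ i ∈ _, _), hfirst, pow_succ,
            ← vecMul_vecMul, ← dotProduct_mulVec]
          simp only [shiftRelation_add_add, ← add_assoc, add_right_comm s 1, add_zero]
      _ = (ξ ᵥ* A ^ t) ⬝ᵥ xh (s + 1)
          + ∑ i ∈ range (t + L), shiftRelation A B ξ η t i ⬝ᵥ uh (s + 1 + i) := by
          rw [hx s (by omega), dotProduct_add, dotProduct_mulVec _ B, vecMul_vecMul]
          ring
      _ = 0 := ih (s + 1) (by omega)

theorem sum_shiftRelation_eq_neg (hx : ∀ s < N, xh (s + 1) = A *ᵥ xh s + B *ᵥ uh s)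
    (hη : ∀ k, K ≤ k → η k = 0)
    (hrel : ∀ s, s + K ≤ N → ξ ⬝ᵥ xh s + ∑ i ∈ range K, η i ⬝ᵥ uh (s + i) = 0)
    {t s : ℕ} (ht : t ≤ n) (hs : s + (n + K) ≤ N) :
    ∑ i ∈ range (n + K), shiftRelation A B ξ η n (i + n - t) ⬝ᵥ uh (s + i) =
      -((ξ ᵥ* A ^ t) ⬝ᵥ xh s) := by
  have hreindex : ∀ i, shiftRelation A B ξ η n (i + n - t) = shiftRelation A B ξ η t i :=
    fun i => by
      rw [← shiftRelation_add_add t (n - t) i, Nat.add_sub_cancel' ht, Nat.add_sub_assoc ht]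
  rw [eq_neg_iff_add_eq_zero, add_comm,
    ← dotProduct_add_sum_shiftRelation_eq_zero hx hrel t s (by omega)]
  simp only [hreindex]
  refine congrArg _ (sum_subset (range_subset_range.2 (by omega)) fun i _ hi => ?_).symm
  rw [shiftRelation_eq_zero hη (by simpa using hi), zero_dotProduct]

theorem eq_zero_of_data_relation (hctrb : (ctrbMatrix A B).rank = n)
    (hx : ∀ s < N, xh (s + 1) = A *ᵥ xh s + B *ᵥ uh s) (hdepth : n + K ≤ N)
    (hPE : (hankelMatrix (n + K) N uh).rank = m * (n + K)) (hη : ∀ k, K ≤ k → η k = 0)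
    (hrel : ∀ s, s + K ≤ N → ξ ⬝ᵥ xh s + ∑ i ∈ range K, η i ⬝ᵥ uh (s + i) = 0) :
    ξ = 0 ∧ η = 0 := by
  -- `Ψ = (ξ Aⁿ⁻¹ B, …, ξ A B, ξ B, η 0, η 1, …)`
  set Ψ := shiftRelation A B ξ η n
  set c := fun t => A.charpoly.coeff t
  have hΨ : ∀ j, n + K ≤ j → Ψ j = 0 := fun j hj => shiftRelation_eq_zero hη hj
  have hθ : ∀ s, s + (n + K) ≤ N →
      ∑ i ∈ range (n + K), (∑ t ∈ range (n + 1), c t • Ψ (i + n - t)) ⬝ᵥ uh (s + i) = 0 := by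
    intro s hs
    calc _ = ∑ t ∈ range (n + 1), c t * ∑ i ∈ range (n + K), Ψ (i + n - t) ⬝ᵥ uh (s + i) := by
          simp only [sum_dotProduct, smul_dotProduct, mul_sum, smul_eq_mul]
          exact sum_comm
      _ = -((ξ ᵥ* Polynomial.aeval A A.charpoly) ⬝ᵥ xh s) := by
          rw [Polynomial.aeval_eq_sum_range, charpoly_natDegree_eq_dim, Fintype.card_fin,
            vecMul_sum, sum_dotProduct, ← sum_neg_distrib]
          refine sum_congr rfl fun t ht => ?_
          rw [sum_shiftRelation_eq_neg hx hη hrel (by simpa [Nat.lt_succ_iff] using ht) hs,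
            vecMul_smul, smul_dotProduct, smul_eq_mul, mul_neg]
      _ = 0 := by rw [aeval_self_charpoly, vecMul_zero, zero_dotProduct, neg_zero]
  have hrec : ∀ i, ∑ t ∈ range (n + 1), c t • Ψ (i + n - t) = 0 := by
    intro i
    by_cases hi : i < n + K
    · exact eq_zero_of_hankelMatrix_rank (by omega) hPE hθ i hi
    · exact sum_eq_zero fun t ht => by
        rw [hΨ _ (by have := mem_range.1 ht; omega), smul_zero]
  have hc : c n = 1 := by
    simpa [c] using A.charpoly_monic.coeff_natDegree
  have hΨ0 := eq_zero_of_recurrence hc hΨ hrec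
  refine ⟨eq_zero_of_vecMul_ctrbMatrix A B hctrb fun d hd => ?_, funext fun k => ?_⟩
  · simpa [Ψ, shiftRelation, show n - 1 - d < n by omega,
      show n - 1 - (n - 1 - d) = d by omega] using hΨ0 (n - 1 - d)
  · simpa [Ψ, shiftRelation] using hΨ0 (k + n)

theorem exists_shiftedSum_eq (hctrb : (ctrbMatrix A B).rank = n)
    (hx : ∀ s < N, xh (s + 1) = A *ᵥ xh s + B *ᵥ uh s)
    (hdepth : n + K ≤ N) (hPE : (hankelMatrix (n + K) N uh).rank = m * (n + K))
    (x₀ : Fin n → ℝ) (u : ℕ → Fin m → ℝ) :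
    ∃ g : Fin (N - K + 1) → ℝ, shiftedSum xh g 0 = x₀ ∧ ∀ k < K, shiftedSum uh g k = u k := by
  let X : Matrix (Fin n) (Fin (N - K + 1)) ℝ := Matrix.of fun i j => xh j i
  have hsurj : Function.Surjective (fromRows X (hankelMatrix K N uh)).mulVec := by
    refine mulVec_surjective_of_vecMul_eq_zero fun v hv => ?_
    let η : ℕ → Fin m → ℝ := fun k a => if hk : k < K then v (Sum.inr (⟨k, hk⟩, a)) else 0
    have hvη : v ∘ Sum.inr = fun p : Fin K × Fin m => η p.1 p.2 := by
      funext p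
      simp [η]
    rw [vecMul_fromRows, hvη] at hv
    have hrel :
        ∀ s, s + K ≤ N → (v ∘ Sum.inl) ⬝ᵥ xh s + ∑ i ∈ range K, η i ⬝ᵥ uh (s + i) = 0 :=
      fun s hs => by
        have h := congrFun hv ⟨s, by omega⟩
        rwa [Pi.add_apply, vecMul_hankelMatrix] at h
    obtain ⟨hξ, hη⟩ := eq_zero_of_data_relation hctrb hx hdepth hPE
      (fun k hk => funext fun a => dif_neg (by omega)) hrel
    ext (i | p)
    · exact congrFun hξ i
    · simpa [hη] using congrFun hvη p
  obtain ⟨g, hg⟩ := hsurj (Sum.elim x₀ fun p : Fin K × Fin m => u p.1 p.2)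
  rw [fromRows_mulVec, funext_iff, Sum.forall] at hg
  refine ⟨g, funext fun i => ?_, fun k hk => funext fun a => ?_⟩
  · simpa [X, shiftedSum, mulVec, dotProduct, Finset.sum_apply, mul_comm] using hg.1 i
  · simpa [hankelMatrix_mulVec] using hg.2 (⟨k, hk⟩, a)

end Relations

/-- Willems' fundamental lemma: let `(A,B,C,D)` define the
deterministic LTI system `x(k+1) = A x(k) + B u(k)`, `y(k) = C x(k) + D u(k)`, with
`(A,B)` controllable (the controllability matrix `[B AB ⋯ A^{n−1}B]` has rank `n`).
Let `(uh(i), yh(i))_{i=0}^{N−1}` be an input/output trajectory of the system, produced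
by some state trajectory `xh`, and suppose the input `uh` is persistently exciting of
order `n + K` (its depth-`(n+K)` Hankel matrix has full row rank `m(n+K)`). Then
`(u, y)` is a `K`-long input/output trajectory of the system (i.e. generated by some
state sequence) if and only if `col(u, y)` lies in the column space of
`𝓗_K = col(Û_{0,K,N−K+1}, Ŷ_{0,K,N−K+1})`. -/
theorem willems_fundamental_lemma {n m ℓ N K : ℕ}
    (A : Matrix (Fin n) (Fin n) ℝ) (B : Matrix (Fin n) (Fin m) ℝ)
    (C : Matrix (Fin ℓ) (Fin n) ℝ) (D : Matrix (Fin ℓ) (Fin m) ℝ)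
    (hctrb : (Matrix.of fun (i : Fin n) (p : Fin n × Fin m) =>
        (A ^ (p.1 : ℕ) * B) i p.2).rank = n)
    (uh : ℕ → Fin m → ℝ) (yh : ℕ → Fin ℓ → ℝ) (xh : ℕ → Fin n → ℝ)
    (htraj : ∀ i < N, xh (i + 1) = A.mulVec (xh i) + B.mulVec (uh i) ∧
        yh i = C.mulVec (xh i) + D.mulVec (uh i))
    (hdepth : n + K ≤ N)
    (hPE : (hankelMatrix (n + K) N uh).rank = m * (n + K))
    (u : ℕ → Fin m → ℝ) (y : ℕ → Fin ℓ → ℝ) :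
    (∃ x : ℕ → Fin n → ℝ, ∀ k < K,
        x (k + 1) = A.mulVec (x k) + B.mulVec (u k) ∧
        y k = C.mulVec (x k) + D.mulVec (u k)) ↔
    (∃ g : Fin (N - K + 1) → ℝ,
        (stackedHankel K N uh yh).mulVec g =
          Sum.elim (fun q : Fin K × Fin m => u q.1.1 q.2)
                   (fun q : Fin K × Fin ℓ => y q.1.1 q.2)) := by
  have hdata : IsTrajectory A B C D N xh uh yh := htraj
  have hwindow := fun g : Fin (N - K + 1) → ℝ => hdata.shiftedSum (T := K) (by omega) g
  simp only [stackedHankel_mulVec_eq_iff]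
  constructor
  · rintro ⟨x, hx⟩
    obtain ⟨g, hg₀, hgu⟩ := exists_shiftedSum_eq (A := A) (B := B) hctrb
      (fun i hi => (htraj i hi).1) hdepth hPE (x 0) u
    exact ⟨g, fun k hk => ⟨hgu k hk, (hwindow g).output_eq hx hg₀ hgu k hk⟩⟩
  · rintro ⟨g, hg⟩
    refine ⟨shiftedSum xh g, fun k hk => ?_⟩
    rw [← (hg k hk).1, ← (hg k hk).2]
    exact hwindow g k hk
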